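/- Let X be a type with an adjacency relation adj, and let f : X → ℤ have sensitivity A, i.e. |f x − f x'| ≤ A for all adjacent x, x', where A > 0. Let ε > 0, 0 < δ < 1, and λ > 0 with λ ≥ A/ε. Let t be a real number with t ≥ A and t ≥ λ·ln((exp(A/λ) − 1 + δ)/(2δ)). Define the mechanism G x to be the pushforward of the truncated Laplace measure Lap(λ, −t) under the map u ↦ (f x : ℝ) + u. Then G is (ε, δ)-differentially private: for all adjacent x, x' and every measurable set O ⊆ ℝ, (G x) O ≤ exp(ε)·(G x') O + δ. -/

import Mathlib

open MeasureTheory ProbabilityTheory Real Set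
open scoped ENNReal

/-!
Shifting the noise by `d` with `|d| ≤ A` changes the Laplace density by at most the factor
`exp (A / λ)`. What the shift pushes below the truncation point `-t` has no counterpart in the
truncated measure; it lies in `(-t, -t + A]`, which for `t ≥ A` is on the left branch of the
density and has Laplace mass `e^{-t/λ} (e^{A/λ} - 1) / 2`. The choice of `t` makes this at most
`δ` times the normalising mass `1 - e^{-t/λ} / 2`.
-/

noncomputable def laplaceMeasure (l : ℝ) : Measure ℝ :=
  volume.withDensity (fun u => ENNReal.ofReal ((1 / (2 * l)) * Real.exp (-|u| / l)))

noncomputable def truncLaplace (l t : ℝ) : Measure ℝ :=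
  (laplaceMeasure l (Set.Ioi (-t)))⁻¹ • (laplaceMeasure l).restrict (Set.Ioi (-t))

theorem cond_le_mul_add_of_inter_le {α : Type*} [MeasurableSpace α] {μ : Measure α}
    {s B C : Set α} {k δ : ℝ≥0∞} (hs : MeasurableSet s) (hμs₀ : μ s ≠ 0) (hμs : μ s ≠ ∞)
    (h : μ (s ∩ B) ≤ k * μ (s ∩ C) + δ * μ s) :
    μ[B | s] ≤ k * μ[C | s] + δ := by
  rw [cond_apply hs, cond_apply hs]
  calc (μ s)⁻¹ * μ (s ∩ B) ≤ (μ s)⁻¹ * (k * μ (s ∩ C) + δ * μ s) := by gcongr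
    _ = k * ((μ s)⁻¹ * μ (s ∩ C)) + δ := by
      rw [mul_add, mul_left_comm, mul_left_comm _ δ, ENNReal.inv_mul_cancel hμs₀ hμs, mul_one]

noncomputable def laplacePDF (l u : ℝ) : ℝ := (1 / (2 * l)) * exp (-|u| / l)

theorem laplaceMeasure_eq_withDensity (l : ℝ) :
    laplaceMeasure l = volume.withDensity fun u => ENNReal.ofReal (laplacePDF l u) := rfl

theorem truncLaplace_eq_cond (l t : ℝ) : truncLaplace l t = (laplaceMeasure l)[|Ioi (-t)] := rfl

theorem laplacePDF_le_exp_mul {l : ℝ} (hl : 0 < l) (u d : ℝ) :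
    laplacePDF l u ≤ exp (|d| / l) * laplacePDF l (u + d) := by
  have habs : -|u| ≤ |d| + -|u + d| := by linarith [abs_add_le u d]
  calc laplacePDF l u ≤ 1 / (2 * l) * exp ((|d| + -|u + d|) / l) := by
        unfold laplacePDF; gcongr
    _ = exp (|d| / l) * laplacePDF l (u + d) := by
        rw [laplacePDF, add_div, exp_add]; ring

theorem laplaceMeasure_preimage_add_le {l : ℝ} (hl : 0 < l) (d : ℝ) {S : Set ℝ}
    (hS : MeasurableSet S) :
    laplaceMeasure l ((· + d) ⁻¹' S) ≤ ENNReal.ofReal (exp (|d| / l)) * laplaceMeasure l S := by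
  rw [laplaceMeasure_eq_withDensity, withDensity_apply _ (hS.preimage (measurable_add_const d)),
    withDensity_apply _ hS, ← lintegral_const_mul _ (by unfold laplacePDF; fun_prop),
    ← (measurePreserving_add_right volume d).setLIntegral_comp_preimage hS
      (by unfold laplacePDF; fun_prop)]
  refine lintegral_mono fun u => ?_
  rw [← ENNReal.ofReal_mul (exp_nonneg _)]
  exact ENNReal.ofReal_le_ofReal (laplacePDF_le_exp_mul hl u d)

theorem laplaceMeasure_Ioc_of_nonpos {l : ℝ} (hl : 0 < l) {a b : ℝ} (hab : a ≤ b) (hb : b ≤ 0) :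
    laplaceMeasure l (Ioc a b) = ENNReal.ofReal ((exp (b / l) - exp (a / l)) / 2) := by
  have hpdf : ∀ u ∈ Ioc a b, ENNReal.ofReal (laplacePDF l u)
      = ENNReal.ofReal (1 / (2 * l) * exp (u / l)) := by
    intro u hu
    rw [laplacePDF, abs_of_nonpos (hu.2.trans hb), neg_neg]
  rw [laplaceMeasure_eq_withDensity, withDensity_apply _ measurableSet_Ioc,
    setLIntegral_congr_fun measurableSet_Ioc hpdf,
    ← ofReal_integral_eq_lintegral_ofReal (Continuous.integrableOn_Ioc (by fun_prop))
      (.of_forall fun u => by positivity),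
    ← intervalIntegral.integral_of_le hab, intervalIntegral.integral_const_mul,
    intervalIntegral.integral_comp_div exp hl.ne', integral_exp, smul_eq_mul]
  congr 1
  field_simp

theorem laplaceMeasure_Ioi_zero {l : ℝ} (hl : 0 < l) :
    laplaceMeasure l (Ioi 0) = ENNReal.ofReal (1 / 2) := by
  have hpdf : ∀ u ∈ Ioi (0 : ℝ), ENNReal.ofReal (laplacePDF l u)
      = ENNReal.ofReal (1 / (2 * l) * exp (-(l⁻¹ * u))) := by
    intro u hu
    rw [laplacePDF, abs_of_pos hu, neg_div, div_eq_inv_mul u l]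
  have hint : IntegrableOn (fun u => exp (-(l⁻¹ * u))) (Ioi 0) := by
    simpa only [neg_mul] using exp_neg_integrableOn_Ioi 0 (inv_pos.2 hl)
  rw [laplaceMeasure_eq_withDensity, withDensity_apply _ measurableSet_Ioi,
    setLIntegral_congr_fun measurableSet_Ioi hpdf,
    ← ofReal_integral_eq_lintegral_ofReal (hint.const_mul _) (.of_forall fun u => by positivity),
    integral_const_mul,
    integral_comp_mul_left_Ioi (fun x => exp (-x)) 0 (inv_pos.2 hl), mul_zero,
    integral_exp_neg_Ioi_zero, smul_eq_mul]
  congr 1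
  field_simp

theorem laplaceMeasure_Ioi_neg {l t : ℝ} (hl : 0 < l) (ht : 0 ≤ t) :
    laplaceMeasure l (Ioi (-t)) = ENNReal.ofReal (1 - exp (-t / l) / 2) := by
  have hexp : exp (-t / l) ≤ 1 :=
    exp_le_one_iff.2 (div_nonpos_of_nonpos_of_nonneg (by linarith) hl.le)
  rw [← Ioc_union_Ioi_eq_Ioi (neg_nonpos.2 ht),
    measure_union (Ioc_disjoint_Ioi le_rfl) measurableSet_Ioi,
    laplaceMeasure_Ioc_of_nonpos hl (neg_nonpos.2 ht) le_rfl, laplaceMeasure_Ioi_zero hl,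
    ← ENNReal.ofReal_add (by rw [zero_div, exp_zero]; linarith) (by norm_num), zero_div, exp_zero]
  ring_nf

theorem laplaceMeasure_Ioc_le_mul_Ioi {l t A δ : ℝ} (hl : 0 < l) (hA : 0 ≤ A) (hAt : A ≤ t)
    (hδ : 0 < δ) (ht : l * log ((exp (A / l) - 1 + δ) / (2 * δ)) ≤ t) :
    laplaceMeasure l (Ioc (-t) (-t + A)) ≤ ENNReal.ofReal δ * laplaceMeasure l (Ioi (-t)) := by
  rw [laplaceMeasure_Ioc_of_nonpos hl (by linarith) (by linarith),
    laplaceMeasure_Ioi_neg hl (hA.trans hAt), ← ENNReal.ofReal_mul hδ.le]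
  refine ENNReal.ofReal_le_ofReal ?_
  have hR : exp (A / l) - 1 + δ ≤ exp (t / l) * (2 * δ) :=
    (div_le_iff₀ (by positivity)).1 <|
      (le_exp_log _).trans <| exp_le_exp.2 <| (le_div_iff₀' hl).2 ht
  have hinv : exp (-t / l) * exp (t / l) = 1 := by rw [← exp_add, neg_div, neg_add_cancel, exp_zero]
  have hshift : exp ((-t + A) / l) = exp (-t / l) * exp (A / l) := by rw [add_div, exp_add]
  rw [hshift]
  nlinarith [exp_pos (-t / l)]

theorem truncLaplace_preimage_add_le {l t A δ d : ℝ} (hl : 0 < l) (hd : |d| ≤ A) (hAt : A ≤ t)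
    (hδ : 0 < δ) (ht : l * log ((exp (A / l) - 1 + δ) / (2 * δ)) ≤ t) {S : Set ℝ}
    (hS : MeasurableSet S) :
    truncLaplace l t ((· + d) ⁻¹' S)
      ≤ ENNReal.ofReal (exp (A / l)) * truncLaplace l t S + ENNReal.ofReal δ := by
  have hA : 0 ≤ A := (abs_nonneg d).trans hd
  have hmass₀ : laplaceMeasure l (Ioi (-t)) ≠ 0 := by
    refine (lt_of_lt_of_le ?_ (measure_mono (Ioi_subset_Ioi (neg_nonpos.2 (hA.trans hAt))))).ne'
    rw [laplaceMeasure_Ioi_zero hl]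
    norm_num
  have hmass : laplaceMeasure l (Ioi (-t)) ≠ ∞ := by
    rw [laplaceMeasure_Ioi_neg hl (hA.trans hAt)]
    exact ENNReal.ofReal_ne_top
  have hcover : Ioi (-t) ∩ (· + d) ⁻¹' S ⊆ (· + d) ⁻¹' (Ioi (-t) ∩ S) ∪ Ioc (-t) (-t + A) := by
    rintro u ⟨hu, huS⟩
    by_cases h : -t < u + d
    · exact Or.inl ⟨h, huS⟩
    · exact Or.inr ⟨hu, by linarith [neg_le_abs d]⟩
  rw [truncLaplace_eq_cond]
  refine cond_le_mul_add_of_inter_le measurableSet_Ioi hmass₀ hmass ?_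
  calc laplaceMeasure l (Ioi (-t) ∩ (· + d) ⁻¹' S)
      ≤ laplaceMeasure l ((· + d) ⁻¹' (Ioi (-t) ∩ S)) + laplaceMeasure l (Ioc (-t) (-t + A)) :=
        (measure_mono hcover).trans (measure_union_le _ _)
    _ ≤ ENNReal.ofReal (exp (|d| / l)) * laplaceMeasure l (Ioi (-t) ∩ S)
          + ENNReal.ofReal δ * laplaceMeasure l (Ioi (-t)) :=
        add_le_add (laplaceMeasure_preimage_add_le hl d (measurableSet_Ioi.inter hS))
          (laplaceMeasure_Ioc_le_mul_Ioi hl hA hAt hδ ht)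
    _ ≤ ENNReal.ofReal (exp (A / l)) * laplaceMeasure l (Ioi (-t) ∩ S)
          + ENNReal.ofReal δ * laplaceMeasure l (Ioi (-t)) := by
        gcongr

theorem truncated_laplace_mechanism_dp_general
    {X : Type*} (adj : X → X → Prop) (f : X → ℤ) (A ε δ lam t : ℝ)
    (hsens : ∀ x x', adj x x' → |(f x : ℝ) - (f x' : ℝ)| ≤ A)
    (hε : 0 < ε) (hδ0 : 0 < δ) (hlam : 0 < lam)
    (hlamε : A / ε ≤ lam) (htA : A ≤ t)
    (ht : lam * Real.log ((Real.exp (A / lam) - 1 + δ) / (2 * δ)) ≤ t)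
    (G : X → Measure ℝ)
    (hG : ∀ x, G x = (truncLaplace lam t).map (fun u => (f x : ℝ) + u)) :
    ∀ x x', adj x x' → ∀ O : Set ℝ, MeasurableSet O →
      G x O ≤ ENNReal.ofReal (Real.exp ε) * G x' O + ENNReal.ofReal δ := by
  intro x x' hadj O hO
  have hAε : A / lam ≤ ε := (div_le_iff₀ hlam).2 (by rw [div_le_iff₀ hε] at hlamε; linarith)
  have hshift : (fun u => (f x : ℝ) + u) ⁻¹' O
      = (· + ((f x : ℝ) - f x')) ⁻¹' ((fun u => (f x' : ℝ) + u) ⁻¹' O) := by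
    ext u
    simp only [mem_preimage]
    ring_nf
  rw [hG, hG, Measure.map_apply (by fun_prop) hO, Measure.map_apply (by fun_prop) hO, hshift]
  calc truncLaplace lam t ((· + ((f x : ℝ) - f x')) ⁻¹' ((fun u => (f x' : ℝ) + u) ⁻¹' O))
      ≤ ENNReal.ofReal (exp (A / lam)) * truncLaplace lam t ((fun u => (f x' : ℝ) + u) ⁻¹' O)
          + ENNReal.ofReal δ :=
        truncLaplace_preimage_add_le hlam (hsens x x' hadj) htA hδ0 ht
          (hO.preimage (by fun_prop))
    _ ≤ ENNReal.ofReal (exp ε) * truncLaplace lam t ((fun u => (f x' : ℝ) + u) ⁻¹' O)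
          + ENNReal.ofReal δ := by
        gcongr

/-- The truncated-Laplace additive mechanism `G x = (f x : ℝ) + u`, with `u ~ Lap(λ, -t)`,
is `(ε, δ)`-differentially private when `f` has sensitivity `A`, `λ ≥ A/ε`,
`t ≥ A` and `t ≥ λ ln((e^{A/λ} - 1 + δ)/(2δ))`. -/
theorem truncated_laplace_mechanism_dp
    {X : Type*} (adj : X → X → Prop) (f : X → ℤ) (A ε δ lam t : ℝ)
    (hA : 0 < A) (hsens : ∀ x x', adj x x' → |(f x : ℝ) - (f x' : ℝ)| ≤ A)
    (hε : 0 < ε) (hδ0 : 0 < δ) (hδ1 : δ < 1) (hlam : 0 < lam)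
    (hlamε : A / ε ≤ lam) (htA : A ≤ t)
    (ht : lam * Real.log ((Real.exp (A / lam) - 1 + δ) / (2 * δ)) ≤ t)
    (G : X → Measure ℝ)
    (hG : ∀ x, G x = (truncLaplace lam t).map (fun u => (f x : ℝ) + u)) :
    ∀ x x', adj x x' → ∀ O : Set ℝ, MeasurableSet O →
      G x O ≤ ENNReal.ofReal (Real.exp ε) * G x' O + ENNReal.ofReal δ :=
  truncated_laplace_mechanism_dp_general adj f A ε δ lam t hsens hε hδ0 hlam hlamε htA ht G hG
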